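/- (Oracle rate of the optimally tuned generalized ℓ₂-regularized estimator, Theorem 4.2.) Under the shared assumptions, suppose additionally u_jᵀ w* ≠ 0 for every j ∈ [p], and run the GR algorithm with H_t = U Λ_t Uᵀ where λ_j^{(t)} = ( σ²/e_j^{(0)} + γ_j^{(1)} n₁ + ⋯ + γ_j^{(t−1)} n_{t−1} ) / n_t for every j ∈ [p] and t ∈ [T]. Then for every t ∈ [T] and j ∈ [p], E[e_j^{(t)}] = σ² / ( σ²/e_j^{(0)} + γ_j^{(1)} n₁ + ⋯ + γ_j^{(t)} n_t ), and consequently L(ŵ_t^{GR}) = ∑_{j=1}^p σ² / ( σ²/e_j^{(0)} + γ_j^{(1)} n₁ + ⋯ + γ_j^{(t)} n_t ). -/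

import Mathlib

open MeasureTheory Matrix ProbabilityTheory Finset

/-!
In the eigenbasis `u_j` the GR objective decouples, and its unique minimiser satisfies
`z_j^{(t)} = (λ_j^{(t)} z_j^{(t-1)} + ξ_j^{(t)}) / (γ_j^{(t)} + λ_j^{(t)})`, where
`z_j^{(t)} = u_jᵀ (ŵ_t - w*)` and `ξ_j^{(t)}` is the task-`t` noise projected on the `j`-th
column of `X_t U / n_t`. These projections are centred, uncorrelated across tasks and have
variance `σ² γ_j^{(t)} / n_t`, while `z_j^{(t-1)}` only involves earlier noise, so
`E (z_j^{(t)})² = (λ² E (z_j^{(t-1)})² + σ² γ / n_t) / (γ + λ)²`. With the oracle weight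
`λ = s_{t-1} / n_t`, where `s_t = σ² / e_j^{(0)} + ∑_{τ ≤ t} γ_j^{(τ)} n_τ`, this is exactly the
posterior-variance update `σ² / s_{t-1} ↦ σ² / s_t` of Bayesian linear regression. Orthogonality
of `U` then sums the directions up to `L(ŵ_t)`.
-/

section RandomVector

variable {Ω ι κ : Type*} [MeasurableSpace Ω] {μ : Measure Ω} [Fintype ι] [Fintype κ]
  {e : Ω → ι → ℝ}

lemma memLp_dotProduct (he : ∀ i, MemLp (fun ω => e ω i) 2 μ) (a : ι → ℝ) :
    MemLp (fun ω => a ⬝ᵥ e ω) 2 μ :=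
  memLp_finsetSum univ fun i _ => (he i).const_mul (a i)

lemma integral_dotProduct_eq_zero (he : ∀ i, Integrable (fun ω => e ω i) μ)
    (hmean : ∀ i, ∫ ω, e ω i ∂μ = 0) (a : ι → ℝ) :
    ∫ ω, a ⬝ᵥ e ω ∂μ = 0 := by
  simp only [dotProduct]
  rw [integral_finsetSum univ fun i _ => (he i).const_mul (a i)]
  simp only [integral_const_mul, hmean, mul_zero, sum_const_zero]

lemma integral_dotProduct_mul_dotProduct_of_covariance [DecidableEq ι] {σ2 : ℝ}
    (he : ∀ i, MemLp (fun ω => e ω i) 2 μ)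
    (hcov : ∀ i k, ∫ ω, e ω i * e ω k ∂μ = if i = k then σ2 else 0) (a b : ι → ℝ) :
    ∫ ω, (a ⬝ᵥ e ω) * (b ⬝ᵥ e ω) ∂μ = σ2 * (a ⬝ᵥ b) := by
  have hint : ∀ i k, Integrable (fun ω => a i * b k * (e ω i * e ω k)) μ := fun i k =>
    ((he i).integrable_mul (he k)).const_mul _
  simp only [dotProduct, sum_mul_sum]
  simp_rw [show ∀ ω i k, a i * e ω i * (b k * e ω k) = a i * b k * (e ω i * e ω k)
    from fun _ _ _ => by ring]
  rw [integral_finsetSum univ fun i _ => integrable_finsetSum univ fun k _ => hint i k,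
    mul_sum]
  refine sum_congr rfl fun i _ => ?_
  rw [integral_finsetSum univ fun k _ => hint i k]
  simp only [integral_const_mul, hcov, mul_ite, mul_zero, sum_ite_eq, mem_univ, if_true]
  ring

lemma integral_dotProduct_mul_dotProduct_of_indepFun {e' : Ω → κ → ℝ}
    (hind : IndepFun e e' μ) (he : ∀ i, Integrable (fun ω => e ω i) μ)
    (he' : ∀ k, Integrable (fun ω => e' ω k) μ) (hmean : ∀ i, ∫ ω, e ω i ∂μ = 0)
    (a : ι → ℝ) (b : κ → ℝ) :
    ∫ ω, (a ⬝ᵥ e ω) * (b ⬝ᵥ e' ω) ∂μ = 0 := by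
  have ha : Measurable fun v : ι → ℝ => a ⬝ᵥ v :=
    (continuous_const.dotProduct continuous_id).measurable
  have hb : Measurable fun v : κ → ℝ => b ⬝ᵥ v :=
    (continuous_const.dotProduct continuous_id).measurable
  have hprod := (hind.comp ha hb).integral_fun_mul_eq_mul_integral
    (integrable_finsetSum univ fun i _ => (he i).const_mul (a i)).aestronglyMeasurable
    (integrable_finsetSum univ fun k _ => (he' k).const_mul (b k)).aestronglyMeasurable
  simp only [Function.comp_apply] at hprod
  rw [hprod, integral_dotProduct_eq_zero he hmean, zero_mul]

end RandomVector

section ScalarRecursion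

variable {Ω : Type*} [MeasurableSpace Ω] {μ : Measure Ω}

lemma integral_sq_div_of_integral_mul_eq_zero {Z ξ : Ω → ℝ} (hZ : MemLp Z 2 μ)
    (hξ : MemLp ξ 2 μ) (horth : ∫ ω, ξ ω * Z ω ∂μ = 0) (l c : ℝ) :
    ∫ ω, ((l * Z ω + ξ ω) / c) ^ 2 ∂μ
      = (l ^ 2 * ∫ ω, Z ω ^ 2 ∂μ + ∫ ω, ξ ω ^ 2 ∂μ) / c ^ 2 := by
  have hξZ : Integrable (fun ω => ξ ω * Z ω) μ := hξ.integrable_mul hZ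
  have hexpand : ∀ ω, ((l * Z ω + ξ ω) / c) ^ 2
      = (l ^ 2 * Z ω ^ 2 + 2 * l * (ξ ω * Z ω) + ξ ω ^ 2) / c ^ 2 := fun ω => by ring
  have hcross : Integrable (fun ω => l ^ 2 * Z ω ^ 2 + 2 * l * (ξ ω * Z ω)) μ :=
    (hZ.integrable_sq.const_mul _).add (hξZ.const_mul _)
  simp_rw [hexpand]
  rw [integral_div, integral_add hcross hξ.integrable_sq,
    integral_add (hZ.integrable_sq.const_mul _) (hξZ.const_mul _),
    integral_const_mul, integral_const_mul, horth, mul_zero, add_zero]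

variable [IsFiniteMeasure μ] {T : ℕ} {ξ : Fin T → Ω → ℝ} {Z : ℕ → Ω → ℝ} {l c : Fin T → ℝ}
  {z₀ : ℝ}

lemma memLp_and_integral_mul_eq_zero_of_recursion (hξ : ∀ t, MemLp (ξ t) 2 μ)
    (hmean : ∀ t, ∫ ω, ξ t ω ∂μ = 0)
    (huncorr : ∀ t τ, t ≠ τ → ∫ ω, ξ t ω * ξ τ ω ∂μ = 0) (hZ₀ : ∀ ω, Z 0 ω = z₀)
    (hrec : ∀ (t : Fin T) ω, Z (t + 1) ω = (l t * Z t ω + ξ t ω) / c t) :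
    ∀ m ≤ T, MemLp (Z m) 2 μ ∧ ∀ t : Fin T, m ≤ t → ∫ ω, ξ t ω * Z m ω ∂μ = 0 := by
  intro m
  induction m with
  | zero =>
    intro _
    rw [show Z 0 = fun _ => z₀ from funext hZ₀]
    exact ⟨memLp_const z₀, fun t _ => by rw [integral_mul_const, hmean, zero_mul]⟩
  | succ m ih =>
    intro hm
    set s : Fin T := ⟨m, hm⟩
    obtain ⟨hZm, horth⟩ := ih (Nat.le_of_succ_le hm)
    have hrec' : Z (m + 1) = fun ω => (c s)⁻¹ * (l s * Z m ω + ξ s ω) :=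
      funext fun ω => by rw [hrec s ω, div_eq_inv_mul]
    refine ⟨hrec' ▸ ((hZm.const_mul _).add (hξ s)).const_mul _, fun t ht => ?_⟩
    have hne : t ≠ s := fun h => by subst h; simp [s] at ht
    have hξZ : Integrable (fun ω => ξ t ω * Z m ω) μ := (hξ t).integrable_mul hZm
    have hξξ : Integrable (fun ω => ξ t ω * ξ s ω) μ := (hξ t).integrable_mul (hξ s)
    have hsplit : ∀ ω, ξ t ω * Z (m + 1) ω
        = (c s)⁻¹ * (l s * (ξ t ω * Z m ω) + ξ t ω * ξ s ω) := fun ω => by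
      rw [hrec']; ring
    simp_rw [hsplit]
    rw [integral_const_mul, integral_add (hξZ.const_mul _) hξξ, integral_const_mul,
      horth t (by omega), huncorr t s hne, mul_zero, zero_add, mul_zero]

lemma variance_update_of_optimal_weight {σ2 s N g : ℝ} (hs : 0 < s) (hN : 0 < N)
    (hg : 0 ≤ g) :
    ((s / N) ^ 2 * (σ2 / s) + σ2 * g / N) / (g + s / N) ^ 2 = σ2 / (s + g * N) := by
  have : 0 < s + g * N := by positivity
  field_simp
  ring

lemma sum_filter_lt_succ {M : Type*} [AddCommMonoid M] (f : Fin T → M) {m : ℕ} (hm : m < T) :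
    ∑ τ ∈ univ.filter (fun τ : Fin T => (τ : ℕ) < m + 1), f τ
      = ∑ τ ∈ univ.filter (fun τ : Fin T => (τ : ℕ) < m), f τ + f ⟨m, hm⟩ := by
  rw [add_comm (∑ τ ∈ _, f τ), ← sum_insert (f := f) (by simp)]
  congr 1
  ext τ
  simp only [mem_filter, mem_univ, true_and, mem_insert, Fin.ext_iff]
  omega

lemma integral_sq_of_recursion [IsProbabilityMeasure μ] {σ2 : ℝ} {g N : Fin T → ℝ}
    (hξ : ∀ t, MemLp (ξ t) 2 μ) (hmean : ∀ t, ∫ ω, ξ t ω ∂μ = 0)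
    (huncorr : ∀ t τ, t ≠ τ → ∫ ω, ξ t ω * ξ τ ω ∂μ = 0)
    (hvar : ∀ t, ∫ ω, ξ t ω ^ 2 ∂μ = σ2 * g t / N t)
    (hσ2 : 0 < σ2) (hz₀ : z₀ ≠ 0) (hg : ∀ t, 0 ≤ g t) (hN : ∀ t, 0 < N t)
    (hl : ∀ t, l t = (σ2 / z₀ ^ 2 + ∑ τ ∈ univ.filter (· < t), g τ * N τ) / N t)
    (hZ₀ : ∀ ω, Z 0 ω = z₀)
    (hrec : ∀ (t : Fin T) ω, Z (t + 1) ω = (l t * Z t ω + ξ t ω) / (g t + l t)) :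
    ∀ m ≤ T, ∫ ω, Z m ω ^ 2 ∂μ
      = σ2 / (σ2 / z₀ ^ 2 + ∑ τ ∈ univ.filter (fun τ : Fin T => (τ : ℕ) < m), g τ * N τ) := by
  intro m
  induction m with
  | zero =>
    intro _
    simp only [hZ₀, integral_const, probReal_univ, one_smul, not_lt_zero, filter_false,
      sum_empty, add_zero]
    field_simp
  | succ m ih =>
    intro hm
    set s : Fin T := ⟨m, hm⟩
    obtain ⟨hZm, horth⟩ := memLp_and_integral_mul_eq_zero_of_recursion hξ hmean huncorr hZ₀
      hrec m (Nat.le_of_succ_le hm)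
    have hprec : 0 < σ2 / z₀ ^ 2 + ∑ τ ∈ univ.filter (fun τ : Fin T => (τ : ℕ) < m), g τ * N τ :=
      add_pos_of_pos_of_nonneg (by positivity)
        (sum_nonneg fun τ _ => mul_nonneg (hg τ) (hN τ).le)
    simp_rw [show ∀ ω, Z (m + 1) ω = (l s * Z m ω + ξ s ω) / (g s + l s) from hrec s]
    rw [integral_sq_div_of_integral_mul_eq_zero hZm (hξ s) (horth s le_rfl),
      ih (Nat.le_of_succ_le hm), hvar, sum_filter_lt_succ _ hm, ← add_assoc, hl s]
    exact variance_update_of_optimal_weight hprec (hN s) (hg s)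

end ScalarRecursion

section Objective

variable {m p : Type*} [Fintype m] [Fintype p]

/-- `c` plays the role of `1 / n_t`. -/
def grObjective (c : ℝ) (A : Matrix m p ℝ) (y : m → ℝ) (H : Matrix p p ℝ) (w₀ w : p → ℝ) : ℝ :=
  c * ∑ i, (A *ᵥ w - y) i ^ 2 + (w - w₀) ⬝ᵥ (H *ᵥ (w - w₀))

def grGradient (c : ℝ) (A : Matrix m p ℝ) (y : m → ℝ) (H : Matrix p p ℝ) (w₀ w : p → ℝ) :
    p → ℝ :=
  c • (Aᵀ *ᵥ (A *ᵥ w - y)) + H *ᵥ (w - w₀)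

variable {c : ℝ} {A : Matrix m p ℝ} {y : m → ℝ} {H : Matrix p p ℝ}

lemma dotProduct_mulVec_comm_of_transpose_eq (hH : Hᵀ = H) (x z : p → ℝ) :
    x ⬝ᵥ (H *ᵥ z) = z ⬝ᵥ (H *ᵥ x) := by
  rw [dotProduct_mulVec, ← mulVec_transpose, hH, dotProduct_comm]

lemma grObjective_add (hH : Hᵀ = H) (w₀ w d : p → ℝ) :
    grObjective c A y H w₀ (w + d)
      = grObjective c A y H w₀ w + 2 * (d ⬝ᵥ grGradient c A y H w₀ w)
        + d ⬝ᵥ ((c • (Aᵀ * A) + H) *ᵥ d) := by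
  have hsq : ∀ x : m → ℝ, ∑ i, x i ^ 2 = x ⬝ᵥ x := fun x => by simp [dotProduct, sq]
  have hres : A *ᵥ (w + d) - y = (A *ᵥ w - y) + A *ᵥ d := by rw [mulVec_add]; abel
  have hreg : w + d - w₀ = (w - w₀) + d := by abel
  have hAd : ∀ x, (A *ᵥ d) ⬝ᵥ x = d ⬝ᵥ (Aᵀ *ᵥ x) := fun x => by
    rw [dotProduct_comm, dotProduct_mulVec, mulVec_transpose, dotProduct_comm]
  rw [grObjective, grObjective, grGradient, hres, hreg]
  simp only [hsq, add_dotProduct, dotProduct_add, mulVec_add, add_mulVec, smul_mulVec,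
    dotProduct_smul, ← mulVec_mulVec, smul_eq_mul,
    dotProduct_mulVec_comm_of_transpose_eq hH d (w - w₀)]
  rw [dotProduct_comm (A *ᵥ w - y) (A *ᵥ d), hAd, hAd]
  ring

lemma eq_of_grObjective_le_of_grGradient_eq_zero (hH : Hᵀ = H)
    (hM : (c • (Aᵀ * A) + H).PosDef) {w₀ w w' : p → ℝ}
    (hgrad : grGradient c A y H w₀ w = 0)
    (hle : grObjective c A y H w₀ w' ≤ grObjective c A y H w₀ w) : w' = w := by
  by_contra hne
  have hpos := hM.dotProduct_mulVec_pos (sub_ne_zero.mpr hne)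
  rw [star_trivial] at hpos
  have := grObjective_add (c := c) (A := A) (y := y) hH w₀ w (w' - w)
  rw [add_sub_cancel, hgrad, dotProduct_zero, mul_zero, add_zero] at this
  linarith

end Objective

section DiagonalStep

variable {m p : Type*} [Fintype m] [Fintype p] [DecidableEq p] {c : ℝ} {X : Matrix m p ℝ}
  {U : Matrix p p ℝ} {γ lam : p → ℝ}

lemma posDef_mul_diagonal_mul_transpose (hU : Uᵀ * U = 1) {d : p → ℝ} (hd : ∀ j, 0 < d j) :
    (U * diagonal d * Uᵀ).PosDef := by
  have hinj : Function.Injective U.vecMul := fun x z hxz => by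
    simpa [vecMul_vecMul, mul_eq_one_comm.mp hU] using congrArg (· ᵥ* Uᵀ) hxz
  simpa [conjTranspose_eq_transpose_of_trivial] using
    (PosDef.diagonal hd).mul_mul_conjTranspose_same hinj

lemma grGradient_eq_zero (hU : Uᵀ * U = 1) (hSig : c • (Xᵀ * X) = U * diagonal γ * Uᵀ)
    (hpos : ∀ j, 0 < γ j + lam j) (wstar w₀ : p → ℝ) (e : m → ℝ) :
    grGradient c X (X *ᵥ wstar + e) (U * diagonal lam * Uᵀ) w₀
      (wstar + U *ᵥ fun j => (lam j * (Uᵀ *ᵥ (w₀ - wstar)) j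
        + ((c • (X * U)ᵀ) *ᵥ e) j) / (γ j + lam j)) = 0 := by
  set z : p → ℝ := fun j => (lam j * (Uᵀ *ᵥ (w₀ - wstar)) j
    + ((c • (X * U)ᵀ) *ᵥ e) j) / (γ j + lam j)
  have hUUt : U * Uᵀ = 1 := mul_eq_one_comm.mp hU
  have hfit : c • (Xᵀ *ᵥ (X *ᵥ (wstar + U *ᵥ z) - (X *ᵥ wstar + e)))
      = U *ᵥ (diagonal γ *ᵥ z - (c • (X * U)ᵀ) *ᵥ e) := by
    have hγ : c • (Xᵀ *ᵥ (X *ᵥ (U *ᵥ z))) = U *ᵥ (diagonal γ *ᵥ z) := by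
      rw [mulVec_mulVec, ← smul_mulVec, hSig, mulVec_mulVec, Matrix.mul_assoc, hU,
        Matrix.mul_one, mulVec_mulVec]
    have hnoise : U *ᵥ ((X * U)ᵀ *ᵥ e) = Xᵀ *ᵥ e := by
      rw [mulVec_mulVec, transpose_mul, ← Matrix.mul_assoc, hUUt, Matrix.one_mul]
    rw [show X *ᵥ (wstar + U *ᵥ z) - (X *ᵥ wstar + e) = X *ᵥ (U *ᵥ z) - e by
        rw [mulVec_add]; abel,
      mulVec_sub, smul_sub, hγ, mulVec_sub, smul_mulVec, mulVec_smul, hnoise]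
  have hreg : (U * diagonal lam * Uᵀ) *ᵥ (wstar + U *ᵥ z - w₀)
      = U *ᵥ (diagonal lam *ᵥ (z - Uᵀ *ᵥ (w₀ - wstar))) := by
    rw [show wstar + U *ᵥ z - w₀ = U *ᵥ z - (w₀ - wstar) by abel, ← mulVec_mulVec,
      ← mulVec_mulVec, mulVec_sub, mulVec_mulVec (M := Uᵀ), hU, one_mulVec]
  have hz : diagonal γ *ᵥ z - (c • (X * U)ᵀ) *ᵥ e
      + diagonal lam *ᵥ (z - Uᵀ *ᵥ (w₀ - wstar)) = 0 := by
    funext j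
    have := (hpos j).ne'
    simp only [Pi.add_apply, Pi.sub_apply, mulVec_diagonal, Pi.zero_apply, z]
    field_simp
    ring
  rw [grGradient, hfit, hreg, ← mulVec_add, hz, mulVec_zero]

lemma transpose_mulVec_sub_eq_of_forall_grObjective_le (hU : Uᵀ * U = 1)
    (hSig : c • (Xᵀ * X) = U * diagonal γ * Uᵀ) (hpos : ∀ j, 0 < γ j + lam j)
    {wstar w₀ ŵ : p → ℝ} {e : m → ℝ}
    (hmin : ∀ w, grObjective c X (X *ᵥ wstar + e) (U * diagonal lam * Uᵀ) w₀ ŵ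
      ≤ grObjective c X (X *ᵥ wstar + e) (U * diagonal lam * Uᵀ) w₀ w) :
    Uᵀ *ᵥ (ŵ - wstar)
      = fun j => (lam j * (Uᵀ *ᵥ (w₀ - wstar)) j + ((c • (X * U)ᵀ) *ᵥ e) j) / (γ j + lam j) := by
  have hH : (U * diagonal lam * Uᵀ)ᵀ = U * diagonal lam * Uᵀ := by
    simp [transpose_mul, Matrix.mul_assoc]
  have hM : c • (Xᵀ * X) + U * diagonal lam * Uᵀ = U * diagonal (γ + lam) * Uᵀ := by
    rw [hSig, ← Matrix.add_mul, ← Matrix.mul_add, diagonal_add, Pi.add_def]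
  have hŵ := eq_of_grObjective_le_of_grGradient_eq_zero hH
    (hM ▸ posDef_mul_diagonal_mul_transpose hU hpos)
    (grGradient_eq_zero hU hSig hpos wstar w₀ e) (hmin _)
  rw [hŵ, add_sub_cancel_left, mulVec_mulVec, hU, one_mulVec]

lemma dotProduct_smul_transpose_self (hU : Uᵀ * U = 1)
    (hSig : c • (Xᵀ * X) = U * diagonal γ * Uᵀ) (j : p) :
    (c • (X * U)ᵀ) j ⬝ᵥ (c • (X * U)ᵀ) j = c * γ j := by
  have hgram : c • ((X * U)ᵀ * (X * U)) = diagonal γ := by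
    rw [transpose_mul, Matrix.mul_assoc, ← Matrix.mul_assoc Xᵀ, ← Matrix.mul_assoc,
      ← Matrix.smul_mul, ← Matrix.mul_smul, hSig,
      show Uᵀ * (U * diagonal γ * Uᵀ) * U = (Uᵀ * U) * diagonal γ * (Uᵀ * U) by
        simp only [Matrix.mul_assoc],
      hU, Matrix.one_mul, Matrix.mul_one]
  calc (c • (X * U)ᵀ) j ⬝ᵥ (c • (X * U)ᵀ) j = c * (c * ((X * U)ᵀ j ⬝ᵥ (X * U)ᵀ j)) := by
        simp only [dotProduct, Matrix.smul_apply, smul_eq_mul, mul_sum]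
        exact sum_congr rfl fun i _ => by ring
    _ = c * (c • ((X * U)ᵀ * (X * U))) j j := by
        rw [Matrix.smul_apply, mul_apply', smul_eq_mul]
        rfl
    _ = c * γ j := by rw [hgram, diagonal_apply_eq]

lemma sum_transpose_mulVec_sq (hU : U * Uᵀ = 1) (v : p → ℝ) :
    ∑ j, (Uᵀ *ᵥ v) j ^ 2 = ∑ j, v j ^ 2 := by
  simpa only [dotProduct, sq] using
    (show (Uᵀ *ᵥ v) ⬝ᵥ (Uᵀ *ᵥ v) = v ⬝ᵥ v by
      rw [dotProduct_mulVec, vecMul_transpose, mulVec_mulVec, hU, one_mulVec, dotProduct_comm])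

end DiagonalStep

theorem gr_oracle_rate_general
    {Ω : Type} [MeasurableSpace Ω] (μ : Measure Ω) [IsProbabilityMeasure μ]
    (T p : ℕ)
    (n : Fin T → ℕ) (hn : ∀ t, 0 < n t)
    (X : (t : Fin T) → Matrix (Fin (n t)) (Fin p) ℝ)
    (U : Matrix (Fin p) (Fin p) ℝ) (hU : Uᵀ * U = 1)
    (γ : Fin T → Fin p → ℝ) (hγ : ∀ t j, 0 ≤ γ t j)
    (hSig : ∀ t, ((n t : ℝ))⁻¹ • ((X t)ᵀ * X t) = U * Matrix.diagonal (γ t) * Uᵀ)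
    (wstar : Fin p → ℝ) (hwstar : ∀ j, ∑ k, U k j * wstar k ≠ 0)
    (σ2 : ℝ) (hσ2 : 0 < σ2)
    (ε : (t : Fin T) → Ω → Fin (n t) → ℝ)
    (hεL2 : ∀ t i, MemLp (fun ω => ε t ω i) 2 μ)
    (hmean : ∀ t i, ∫ ω, ε t ω i ∂μ = 0)
    (hcov : ∀ t i i', ∫ ω, ε t ω i * ε t ω i' ∂μ = if i = i' then σ2 else 0)
    (hindep : iIndepFun ε μ)
    -- optimal regularization weights
    (lam : Fin T → Fin p → ℝ)
    (hlam : ∀ t j, lam t j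
      = (σ2 / (∑ k, U k j * wstar k) ^ 2
          + ∑ τ ∈ Finset.univ.filter (fun τ => τ < t), γ τ j * n τ) / n t)
    -- the GR iterates
    (what : ℕ → Ω → Fin p → ℝ)
    (h0 : ∀ ω, what 0 ω = 0)
    (hmin : ∀ (t : Fin T) (ω : Ω) (w : Fin p → ℝ),
      (n t : ℝ)⁻¹ * ∑ i, (X t *ᵥ what ((t : ℕ) + 1) ω - (X t *ᵥ wstar + ε t ω)) i ^ 2
        + (what ((t : ℕ) + 1) ω - what (t : ℕ) ω) ⬝ᵥ
            ((U * Matrix.diagonal (lam t) * Uᵀ) *ᵥ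
              (what ((t : ℕ) + 1) ω - what (t : ℕ) ω))
      ≤ (n t : ℝ)⁻¹ * ∑ i, (X t *ᵥ w - (X t *ᵥ wstar + ε t ω)) i ^ 2
        + (w - what (t : ℕ) ω) ⬝ᵥ
            ((U * Matrix.diagonal (lam t) * Uᵀ) *ᵥ (w - what (t : ℕ) ω))) :
    (∀ (t : Fin T) (j : Fin p),
        ∫ ω, (∑ k, U k j * (what ((t : ℕ) + 1) ω k - wstar k)) ^ 2 ∂μ
          = σ2 / (σ2 / (∑ k, U k j * wstar k) ^ 2
              + ∑ τ ∈ Finset.univ.filter (fun τ => τ ≤ t), γ τ j * n τ))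
    ∧ (∀ t : Fin T,
        ∫ ω, ∑ j, (what ((t : ℕ) + 1) ω j - wstar j) ^ 2 ∂μ
          = ∑ j, σ2 / (σ2 / (∑ k, U k j * wstar k) ^ 2
              + ∑ τ ∈ Finset.univ.filter (fun τ => τ ≤ t), γ τ j * n τ)) := by
  have hnR : ∀ t, (0 : ℝ) < n t := fun t => Nat.cast_pos.mpr (hn t)
  have hεint : ∀ t i, Integrable (fun ω => ε t ω i) μ := fun t i =>
    (hεL2 t i).integrable one_le_two
  have hdenom_pos : ∀ t j, 0 < γ t j + lam t j := fun t j => by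
    have := hγ t j
    have := hwstar j
    have := hnR t
    have := sum_nonneg fun τ (_ : τ ∈ univ.filter (· < t)) => mul_nonneg (hγ τ j) (hnR τ).le
    rw [hlam]
    positivity
  set ξ : Fin p → Fin T → Ω → ℝ := fun j t ω => (((n t : ℝ)⁻¹ • (X t * U)ᵀ) *ᵥ ε t ω) j
  set Z : Fin p → ℕ → Ω → ℝ := fun j m ω => (Uᵀ *ᵥ (what m ω - wstar)) j
  have hZ₀ : ∀ j ω, Z j 0 ω = -∑ k, U k j * wstar k := fun j ω => by
    simp only [Z, h0, zero_sub, mulVec_neg, Pi.neg_apply]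
    rfl
  have hrec : ∀ j (t : Fin T) ω,
      Z j (t + 1) ω = (lam t j * Z j t ω + ξ j t ω) / (γ t j + lam t j) := fun j t ω =>
    congrFun (transpose_mulVec_sub_eq_of_forall_grObjective_le hU (hSig t) (hdenom_pos t)
      (hmin t ω)) j
  have hξL2 : ∀ j t, MemLp (ξ j t) 2 μ := fun j t => memLp_dotProduct (hεL2 t) _
  have hξmean : ∀ j t, ∫ ω, ξ j t ω ∂μ = 0 := fun j t =>
    integral_dotProduct_eq_zero (hεint t) (hmean t) _
  have hξuncorr : ∀ j t τ, t ≠ τ → ∫ ω, ξ j t ω * ξ j τ ω ∂μ = 0 := fun j t τ hne =>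
    integral_dotProduct_mul_dotProduct_of_indepFun (hindep.indepFun hne) (hεint t) (hεint τ)
      (hmean t) _ _
  have hξvar : ∀ j t, ∫ ω, ξ j t ω ^ 2 ∂μ = σ2 * γ t j / n t := fun j t => by
    simp only [sq]
    refine (integral_dotProduct_mul_dotProduct_of_covariance (hεL2 t) (hcov t)
      (((n t : ℝ)⁻¹ • (X t * U)ᵀ) j) (((n t : ℝ)⁻¹ • (X t * U)ᵀ) j)).trans ?_
    rw [dotProduct_smul_transpose_self hU (hSig t)]
    ring
  have hrate : ∀ (t : Fin T) j, ∫ ω, Z j (t + 1) ω ^ 2 ∂μ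
      = σ2 / (σ2 / (∑ k, U k j * wstar k) ^ 2 + ∑ τ ∈ univ.filter (· ≤ t), γ τ j * n τ) :=
    fun t j => by
      rw [integral_sq_of_recursion (hξL2 j) (hξmean j) (hξuncorr j) (hξvar j) hσ2
        (neg_ne_zero.mpr (hwstar j)) (fun t => hγ t j) hnR (fun t => by rw [hlam, neg_sq])
        (hZ₀ j) (hrec j) _ t.isLt, neg_sq,
        filter_congr fun τ _ => by rw [Nat.lt_succ_iff, ← Fin.le_def]]
  refine ⟨hrate, fun t => ?_⟩
  have hrotate : ∀ ω, ∑ j, (what (t + 1) ω j - wstar j) ^ 2 = ∑ j, Z j (t + 1) ω ^ 2 :=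
    fun ω => (sum_transpose_mulVec_sq (mul_eq_one_comm.mp hU) _).symm
  simp_rw [hrotate]
  rw [integral_finsetSum univ fun j _ => (memLp_and_integral_mul_eq_zero_of_recursion (hξL2 j)
    (hξmean j) (hξuncorr j) (hZ₀ j) (hrec j) _ t.isLt).1.integrable_sq]
  exact sum_congr rfl fun j _ => hrate t j

/-- **Oracle rate of the optimally tuned generalized
ℓ₂-regularized estimator, Theorem 4.2.** Under simultaneously diagonalizable
covariances `Σ_t = U Γ_t Uᵀ`, `∑_t γ_j^{(t)} > 0` and `u_jᵀ w* ≠ 0` for all `j`,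
running the GR algorithm with `H_t = U Λ_t Uᵀ` and
`λ_j^{(t)} = (σ²/e_j^{(0)} + ∑_{τ<t} γ_j^{(τ)} n_τ)/n_t` yields, for every task
`t` and direction `j`,
`E[e_j^{(t)}] = σ²/(σ²/e_j^{(0)} + ∑_{τ≤t} γ_j^{(τ)} n_τ)`, and consequently
`L(ŵ_t^{GR}) = ∑_j σ²/(σ²/e_j^{(0)} + ∑_{τ≤t} γ_j^{(τ)} n_τ)`. -/
theorem gr_oracle_rate
    {Ω : Type} [MeasurableSpace Ω] (μ : Measure Ω) [IsProbabilityMeasure μ]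
    (T p : ℕ)
    (n : Fin T → ℕ) (hn : ∀ t, 0 < n t)
    (X : (t : Fin T) → Matrix (Fin (n t)) (Fin p) ℝ)
    (U : Matrix (Fin p) (Fin p) ℝ) (hU : Uᵀ * U = 1)
    (γ : Fin T → Fin p → ℝ) (hγ : ∀ t j, 0 ≤ γ t j)
    (hSig : ∀ t, ((n t : ℝ))⁻¹ • ((X t)ᵀ * X t) = U * Matrix.diagonal (γ t) * Uᵀ)
    (hfull : ∀ j, 0 < ∑ t, γ t j)
    (wstar : Fin p → ℝ) (hwstar : ∀ j, ∑ k, U k j * wstar k ≠ 0)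
    (σ2 : ℝ) (hσ2 : 0 < σ2)
    (ε : (t : Fin T) → Ω → Fin (n t) → ℝ)
    (hεL2 : ∀ t i, MemLp (fun ω => ε t ω i) 2 μ)
    (hmean : ∀ t i, ∫ ω, ε t ω i ∂μ = 0)
    (hcov : ∀ t i i', ∫ ω, ε t ω i * ε t ω i' ∂μ = if i = i' then σ2 else 0)
    (hindep : iIndepFun ε μ)
    -- optimal regularization weights
    (lam : Fin T → Fin p → ℝ)
    (hlam : ∀ t j, lam t j
      = (σ2 / (∑ k, U k j * wstar k) ^ 2
          + ∑ τ ∈ Finset.univ.filter (fun τ => τ < t), γ τ j * n τ) / n t)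
    -- the GR iterates
    (what : ℕ → Ω → Fin p → ℝ)
    (h0 : ∀ ω, what 0 ω = 0)
    (hmin : ∀ (t : Fin T) (ω : Ω) (w : Fin p → ℝ),
      (n t : ℝ)⁻¹ * ∑ i, (X t *ᵥ what ((t : ℕ) + 1) ω - (X t *ᵥ wstar + ε t ω)) i ^ 2
        + (what ((t : ℕ) + 1) ω - what (t : ℕ) ω) ⬝ᵥ
            ((U * Matrix.diagonal (lam t) * Uᵀ) *ᵥ
              (what ((t : ℕ) + 1) ω - what (t : ℕ) ω))
      ≤ (n t : ℝ)⁻¹ * ∑ i, (X t *ᵥ w - (X t *ᵥ wstar + ε t ω)) i ^ 2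
        + (w - what (t : ℕ) ω) ⬝ᵥ
            ((U * Matrix.diagonal (lam t) * Uᵀ) *ᵥ (w - what (t : ℕ) ω))) :
    (∀ (t : Fin T) (j : Fin p),
        ∫ ω, (∑ k, U k j * (what ((t : ℕ) + 1) ω k - wstar k)) ^ 2 ∂μ
          = σ2 / (σ2 / (∑ k, U k j * wstar k) ^ 2
              + ∑ τ ∈ Finset.univ.filter (fun τ => τ ≤ t), γ τ j * n τ))
    ∧ (∀ t : Fin T,
        ∫ ω, ∑ j, (what ((t : ℕ) + 1) ω j - wstar j) ^ 2 ∂μ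
          = ∑ j, σ2 / (σ2 / (∑ k, U k j * wstar k) ^ 2
              + ∑ τ ∈ Finset.univ.filter (fun τ => τ ≤ t), γ τ j * n τ)) :=
  gr_oracle_rate_general μ T p n hn X U hU γ hγ hSig wstar hwstar σ2 hσ2 ε hεL2 hmean hcov hindep
    lam hlam what h0 hmin
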